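/- Let K be a finite field, u a unit of K with u ≠ 1 and u ≠ −1. Then the u-trinomial minimal solution over K is irreducible if and only if for every integer l ≥ 1 one has u^{2l} + u^{l+1} − 1 ≠ 0 and u^{2l} − u^{l+1} − 1 ≠ 0. -/

import Mathlib

/-!
Write `v = u⁻¹` and `T l = (u, v, v) ^ l`. Then `M(T l) = ±[[u ^ l, *], [0, u ^ (-l)]]`, so `T l`
is a λ-quiddity iff `u ^ (2 * l) = 1`, and the minimal solution is `T k` for the least such
`k ≥ 1`. If `c ∼ a ⊕ b` with `b = (x, s, y)` a λ-quiddity, the corner `p` of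
`M(s) = [[p, q], [r, w]]` is `±1`; conversely a segment `s` of `c` with `p = ±1`, leaving room for
`a`, splits off `b = (-p q, s, p r)`. The segments of the periodic word `T k T k` are `P (T l) S`
with `P` a suffix of `(v, v)` and `S` a prefix of `(u, v)`. Their corners are `0` or `±u ^ e` with
`0 < |e| < k`, which is not `±1` by minimality of `k`, except for `P = (v, v)`, `S = ()`: the
corner of `(v, v) T (l - 1)` is `±(u ^ (l - 1) - u ^ (-l - 1))`, and it is `±1` exactly when `u`
is a root of `X ^ (2 * l) ± X ^ (l + 1) - 1`. As `u ^ (2 * k) = 1`, such an `l` can be reduced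
modulo `k`.
-/

namespace Quiddity

variable {A : Type*} [CommRing A]

/-- `mMat [a₁, …, aₙ]` is the matrix product `[[aₙ,-1],[1,0]] ⋯ [[a₁,-1],[1,0]]`. -/
def mMat : List A → Matrix (Fin 2) (Fin 2) A
  | [] => 1
  | a :: t => mMat t * !![a, -1; 1, 0]

/-- Continuant: `cont [] = K₀ = 1`, `cont [a] = K₁(a) = a`, and the continuant recursion. -/
def cont : List A → A
  | [] => 1
  | [a] => a
  | a :: b :: t => a * cont (b :: t) - cont t

/-- A λ-quiddity is a tuple with `Mₙ(a₁,…,aₙ) = ± Id`. -/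
def IsQuiddity (l : List A) : Prop := mMat l = 1 ∨ mMat l = -1

/-- The sum `⊕` of two tuples (meaningful for tuples of length ≥ 2):
`(a₁,…,aₘ) ⊕ (b₁,…,b_l) = (a₁+b_l, a₂,…,a_{m−1}, aₘ+b₁, b₂,…,b_{l−1})`. -/
def oplus (la lb : List A) : List A :=
  (la.headD 0 + lb.getLastD 0) ::
    (la.tail.dropLast ++ (la.getLastD 0 + lb.headD 0) :: lb.tail.dropLast)

/-- Two tuples are equivalent if one is a cyclic permutation of the other or of its
reversal. -/
def TupleEquiv (l l' : List A) : Prop :=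
  List.IsRotated l l' ∨ List.IsRotated l.reverse l'

/-- A λ-quiddity `c` is reducible if `c ∼ a ⊕ b` with `b` a λ-quiddity and both of size ≥ 3. -/
def QuiddityReducible (c : List A) : Prop :=
  ∃ a b : List A, 3 ≤ a.length ∧ 3 ≤ b.length ∧ IsQuiddity b ∧ TupleEquiv c (oplus a b)

/-- `(a, b, a, b, …, a, b)` with `k` repetitions of the pair `(a, b)` (size `2k`). -/
def dynList : ℕ → A → A → List A
  | 0, _, _ => []
  | k + 1, a, b => a :: b :: dynList k a b

/-- `(u, v, v, u, v, v, …, u, v, v)` with `k` repetitions of the block `(u, v, v)`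
(size `3k`). -/
def triList : ℕ → A → A → List A
  | 0, _, _ => []
  | k + 1, a, b => a :: b :: b :: triList k a b

end Quiddity

open Quiddity

theorem List.IsRotated.infix_append_self {α : Type*} {l l' : List α} (h : l ~r l') :
    l' <:+: l ++ l := by
  obtain ⟨n, hn, rfl⟩ := List.isRotated_iff_mod.1 h
  rw [List.rotate_eq_drop_append_take hn]
  exact ⟨l.take n, l.drop n, by
    rw [List.append_assoc, List.append_assoc, List.take_append_drop, ← List.append_assoc,
      List.take_append_drop]⟩

namespace Quiddity

section CommRing

variable {A : Type*} [CommRing A]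

@[simp] lemma mMat_nil : mMat ([] : List A) = 1 := rfl

@[simp] lemma mMat_cons (a : A) (t : List A) : mMat (a :: t) = mMat t * !![a, -1; 1, 0] := rfl

lemma mMat_append (l₁ l₂ : List A) : mMat (l₁ ++ l₂) = mMat l₂ * mMat l₁ := by
  induction l₁ with
  | nil => simp
  | cons a t ih => simp [ih, mul_assoc]

lemma det_mMat (l : List A) : (mMat l).det = 1 := by
  induction l with
  | nil => simp
  | cons a t ih => simp [Matrix.det_mul, ih, Matrix.det_fin_two_of]

lemma mMat_cons_apply_zero (a : A) (t : List A) (i : Fin 2) :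
    mMat (a :: t) i 0 = a * mMat t i 0 + mMat t i 1 := by
  simp [Matrix.mul_apply, Fin.sum_univ_two, mul_comm]

lemma mMat_cons_apply_one (a : A) (t : List A) (i : Fin 2) :
    mMat (a :: t) i 1 = -mMat t i 0 := by
  simp [Matrix.mul_apply, Fin.sum_univ_two]

lemma mMat_append_singleton_zero_apply (t : List A) (a : A) (j : Fin 2) :
    mMat (t ++ [a]) 0 j = a * mMat t 0 j - mMat t 1 j := by
  simp [mMat_append, Matrix.mul_apply, Fin.sum_univ_two, sub_eq_add_neg]

lemma mMat_append_singleton_one_apply (t : List A) (a : A) (j : Fin 2) :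
    mMat (t ++ [a]) 1 j = mMat t 0 j := by
  simp [mMat_append, Matrix.mul_apply, Fin.sum_univ_two]

lemma mMat_append_pair_zero_apply (t : List A) (a b : A) (j : Fin 2) :
    mMat (t ++ [a, b]) 0 j = (b * a - 1) * mMat t 0 j - b * mMat t 1 j := by
  rw [show t ++ [a, b] = t ++ [a] ++ [b] by simp, mMat_append_singleton_zero_apply,
    mMat_append_singleton_zero_apply, mMat_append_singleton_one_apply]
  ring

lemma mMat_cons_append_singleton_one_one (x y : A) (s : List A) :
    mMat (x :: (s ++ [y])) 1 1 = -mMat s 0 0 := by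
  rw [mMat_cons_apply_one, mMat_append_singleton_one_apply]

lemma mMat_zero_zero_eq_one_or_neg_one {x y : A} {s : List A}
    (h : IsQuiddity (x :: (s ++ [y]))) : mMat s 0 0 = 1 ∨ mMat s 0 0 = -1 := by
  have h11 := mMat_cons_append_singleton_one_one x y s
  rcases h with h | h <;> rw [h] at h11
  · exact .inr (by simpa [neg_eq_iff_eq_neg] using h11.symm)
  · exact .inl (by simpa using h11.symm)

/-- The product is `-p • 1`, because `det M(s) = 1` and `p ^ 2 = 1`. -/
lemma isQuiddity_cons_append_singleton {s : List A} {p q r w : A}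
    (hs : mMat s = !![p, q; r, w]) (hp : p = 1 ∨ p = -1) :
    IsQuiddity (-(p * q) :: (s ++ [p * r])) := by
  have hdet : p * w - q * r = 1 := by simpa [hs, Matrix.det_fin_two_of] using det_mMat s
  have hp2 : p * p = 1 := by rcases hp with rfl | rfl <;> norm_num
  have hw : w = p * (1 + q * r) := by linear_combination p * hdet - w * hp2
  subst hw
  have hM : mMat (-(p * q) :: (s ++ [p * r])) = -p • (1 : Matrix (Fin 2) (Fin 2) A) := by
    rw [mMat_cons, mMat_append, hs]
    ext i j
    rcases hp with rfl | rfl <;> fin_cases i <;> fin_cases j <;>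
      simp [Matrix.mul_apply, Fin.sum_univ_two] <;> ring
  unfold IsQuiddity
  rw [hM]
  rcases hp with rfl | rfl <;> simp

lemma quiddityReducible_of_mMat_zero_zero (x y : A) {w s : List A} (hw : w ≠ []) (hs : s ≠ [])
    (hp : mMat s 0 0 = 1 ∨ mMat s 0 0 = -1) : QuiddityReducible (x :: w ++ y :: s) := by
  obtain ⟨p, q, r, w', hS⟩ : ∃ p q r w', mMat s = !![p, q; r, w'] :=
    ⟨_, _, _, _, Matrix.eta_fin_two _⟩
  have hp' : p = 1 ∨ p = -1 := by simpa [hS] using hp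
  refine ⟨(x - p * r) :: (w ++ [y + p * q]), -(p * q) :: (s ++ [p * r]), ?_, ?_,
    isQuiddity_cons_append_singleton hS hp', Or.inl ?_⟩
  · simpa [Nat.one_le_iff_ne_zero] using hw
  · simpa [Nat.one_le_iff_ne_zero] using hs
  · convert List.IsRotated.refl _ using 1
    simp [oplus, List.getLast?_cons, List.getLast?_append]

lemma exists_segment_of_quiddityReducible {c : List A} (h : QuiddityReducible c) :
    ∃ l s, TupleEquiv c l ∧ s <:+ l ∧ s ≠ [] ∧ s.length + 3 ≤ l.length ∧
      (mMat s 0 0 = 1 ∨ mMat s 0 0 = -1) := by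
  obtain ⟨a, b, ha, hb, hqb, he⟩ := h
  obtain ⟨x, t, rfl⟩ := List.exists_cons_of_length_pos (by omega : 0 < b.length)
  obtain rfl | ⟨s, y, rfl⟩ := t.eq_nil_or_concat'
  · simp at hb
  have hs : 1 ≤ s.length := by simpa using hb
  refine ⟨_, s, he, ⟨(a.headD 0 + y) :: (a.tail.dropLast ++ [a.getLastD 0 + x]), ?_⟩,
    List.ne_nil_of_length_pos hs, ?_, mMat_zero_zero_eq_one_or_neg_one hqb⟩
  · simp [oplus, List.getLast?_cons, List.getLast?_append]
  · simp [oplus]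
    omega

end CommRing

section TriList

variable {A : Type*} (a b : A)

lemma triList_add (m n : ℕ) : triList (m + n) a b = triList m a b ++ triList n a b := by
  induction m with
  | zero => simp [triList]
  | succ m ih => simp [Nat.succ_add, triList, ih]

lemma length_triList (k : ℕ) : (triList k a b).length = 3 * k := by
  induction k with
  | zero => rfl
  | succ k ih => simp only [triList, List.length_cons, ih]; ring

lemma triList_append_singleton (k : ℕ) :
    triList k a b ++ [a] = a :: (triList k a b).reverse := by
  induction k with
  | zero => rfl
  | succ k ih =>
    conv_rhs => rw [triList_add a b k 1]
    simp [triList, ih]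

lemma reverse_triList_isRotated (k : ℕ) : (triList k a b).reverse ~r triList k a b := by
  cases k with
  | zero => rfl
  | succ k =>
    have h := triList_append_singleton a b (k + 1)
    simp only [triList, List.cons_append, List.cons.injEq, true_and] at h ⊢
    rw [← h]
    exact (List.IsRotated.cons_append_singleton (l := b :: b :: triList k a b)).symm

variable {a b}

lemma TupleEquiv.triList_isRotated {k : ℕ} {l : List A} (h : TupleEquiv (triList k a b) l) :
    triList k a b ~r l :=
  h.elim id (reverse_triList_isRotated a b k).symm.trans

lemma prefix_triList {N : ℕ} {p : List A} (h : p <+: triList N a b) :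
    ∃ l S, (S = [] ∨ S = [a] ∨ S = [a, b]) ∧ p = triList l a b ++ S := by
  induction N generalizing p with
  | zero => exact ⟨0, [], .inl rfl, by simpa [triList] using h⟩
  | succ N ih =>
    rcases List.prefix_cons_iff.1 h with rfl | ⟨p, rfl, h₁⟩
    · exact ⟨0, [], .inl rfl, rfl⟩
    rcases List.prefix_cons_iff.1 h₁ with rfl | ⟨p, rfl, h₂⟩
    · exact ⟨0, [a], .inr (.inl rfl), rfl⟩
    rcases List.prefix_cons_iff.1 h₂ with rfl | ⟨p, rfl, h₃⟩
    · exact ⟨0, [a, b], .inr (.inr rfl), rfl⟩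
    obtain ⟨l, S, hS, rfl⟩ := ih h₃
    exact ⟨l + 1, S, hS, rfl⟩

lemma infix_triList {N : ℕ} {s : List A} (h : s <:+: triList N a b) :
    ∃ P l S, (P = [] ∨ P = [b] ∨ P = [b, b]) ∧ (S = [] ∨ S = [a] ∨ S = [a, b]) ∧
      s = P ++ triList l a b ++ S := by
  induction N with
  | zero => exact ⟨[], 0, [], .inl rfl, .inl rfl, by simpa [triList] using h⟩
  | succ N ih =>
    rcases List.infix_cons_iff.1 h with h₁ | h₁
    · obtain ⟨l, S, hS, rfl⟩ := prefix_triList (N := N + 1) h₁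
      exact ⟨[], l, S, .inl rfl, hS, rfl⟩
    rcases List.infix_cons_iff.1 h₁ with h₂ | h₂
    · rcases List.prefix_cons_iff.1 h₂ with rfl | ⟨s, rfl, h₃⟩
      · exact ⟨[], 0, [], .inl rfl, .inl rfl, rfl⟩
      rcases List.prefix_cons_iff.1 h₃ with rfl | ⟨s, rfl, h₄⟩
      · exact ⟨[b], 0, [], .inr (.inl rfl), .inl rfl, rfl⟩
      obtain ⟨l, S, hS, rfl⟩ := prefix_triList h₄
      exact ⟨[b, b], l, S, .inr (.inr rfl), hS, rfl⟩
    rcases List.infix_cons_iff.1 h₂ with h₃ | h₃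
    · rcases List.prefix_cons_iff.1 h₃ with rfl | ⟨s, rfl, h₄⟩
      · exact ⟨[], 0, [], .inl rfl, .inl rfl, rfl⟩
      obtain ⟨l, S, hS, rfl⟩ := prefix_triList h₄
      exact ⟨[b], l, S, .inr (.inl rfl), hS, rfl⟩
    exact ih h₃

end TriList

section Field

variable {K : Type*} [Field K] {U : K}

def IsTrinomialRoot (U : K) (L : ℕ) : Prop :=
  U ^ (2 * L) + U ^ (L + 1) - 1 = 0 ∨ U ^ (2 * L) - U ^ (L + 1) - 1 = 0

lemma isTrinomialRoot_iff {L : ℕ} :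
    IsTrinomialRoot U L ↔ (U ^ (2 * L) - 1) ^ 2 = U ^ (2 * L) * U ^ 2 := by
  have h : U ^ (2 * L) * U ^ 2 = (U ^ (L + 1)) ^ 2 := by ring
  rw [IsTrinomialRoot, h, sq_eq_sq_iff_eq_or_eq_neg]
  constructor <;> rintro (h | h)
  exacts [.inr (by linear_combination h), .inl (by linear_combination h),
    .inr (by linear_combination h), .inl (by linear_combination h)]

lemma IsTrinomialRoot.mod {k L : ℕ} (hk : U ^ (2 * k) = 1) (h : IsTrinomialRoot U L) :
    IsTrinomialRoot U (L % k) := by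
  rw [isTrinomialRoot_iff, pow_mul] at *
  rwa [← pow_eq_pow_mod L hk]

lemma IsTrinomialRoot.one_le (hU : U ≠ 0) {L : ℕ} (h : IsTrinomialRoot U L) : 1 ≤ L := by
  refine Nat.one_le_iff_ne_zero.2 ?_
  rintro rfl
  rw [isTrinomialRoot_iff] at h
  exact pow_ne_zero 2 hU (by simpa using h.symm)

lemma mMat_triList (hU : U ≠ 0) (l : ℕ) :
    mMat (triList l U U⁻¹) =
      (-1 : K) ^ l • !![U ^ l, U⁻¹ * ((U ^ l)⁻¹ - U ^ l); 0, (U ^ l)⁻¹] := by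
  induction l with
  | zero => simp [triList, Matrix.one_fin_two]
  | succ l ih =>
    simp only [triList, mMat_cons, ih]
    ext i j
    fin_cases i <;> fin_cases j <;> simp [Matrix.mul_apply, Fin.sum_univ_two, pow_succ] <;>
      field_simp <;> ring

lemma isQuiddity_triList_iff (hU : U ≠ 0) (m : ℕ) :
    IsQuiddity (triList m U U⁻¹) ↔ U ^ (2 * m) = 1 := by
  rw [IsQuiddity, mMat_triList hU, pow_mul', sq_eq_one_iff]
  rcases neg_one_pow_eq_or K m with hδ | hδ <;> rw [hδ] <;> constructor
  · rintro (h | h) <;> [left; right] <;> simpa using congr($h 0 0)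
  · rintro (h | h) <;> [left; right] <;> ext i j <;> fin_cases i <;> fin_cases j <;> simp [h]
  · rintro (h | h) <;> [right; left] <;> simpa [neg_eq_iff_eq_neg] using congr($h 0 0)
  · rintro (h | h) <;> [right; left] <;> ext i j <;> fin_cases i <;> fin_cases j <;> simp [h]

lemma mMat_triList_zero_zero (hU : U ≠ 0) (l : ℕ) :
    mMat (triList l U U⁻¹) 0 0 = (-1) ^ l * U ^ l := by
  simp [mMat_triList hU]

lemma mMat_triList_zero_one (hU : U ≠ 0) (l : ℕ) :
    mMat (triList l U U⁻¹) 0 1 = (-1) ^ l * (U⁻¹ * ((U ^ l)⁻¹ - U ^ l)) := by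
  simp [mMat_triList hU]

lemma mMat_triList_one_zero (hU : U ≠ 0) (l : ℕ) : mMat (triList l U U⁻¹) 1 0 = 0 := by
  simp [mMat_triList hU]

lemma mMat_triList_one_one (hU : U ≠ 0) (l : ℕ) :
    mMat (triList l U U⁻¹) 1 1 = (-1) ^ l * (U ^ l)⁻¹ := by
  simp [mMat_triList hU]

lemma exists_pow_eq_one_or_isTrinomialRoot_of_segment (hU : U ≠ 0) {P S : List K} (l : ℕ)
    (hP : P = [] ∨ P = [U⁻¹] ∨ P = [U⁻¹, U⁻¹]) (hS : S = [] ∨ S = [U] ∨ S = [U, U⁻¹])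
    (hs : P ++ triList l U U⁻¹ ++ S ≠ []) (h : mMat (P ++ triList l U U⁻¹ ++ S) 0 0 ^ 2 = 1) :
    (∃ m, 0 < m ∧ 3 * m ≤ (P ++ triList l U U⁻¹ ++ S).length + 2 ∧ U ^ (2 * m) = 1) ∨
      ∃ L, IsTrinomialRoot U L := by
  have hsign : (-1 : K) ^ (l * 2) = 1 := Even.neg_one_pow ⟨l, by ring⟩
  -- Up to sign, the nine corners are `U ^ l`, `U ^ (l + 1)`, `0`, `U⁻¹ ^ (l + 1)`, `0`,
  -- `U⁻¹ ^ (l + 1)`, `U⁻¹ ^ (l + 2) - U ^ l`, `U ^ (l + 1)` and `U⁻¹ ^ (l + 2)`.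
  rcases hP with rfl | rfl | rfl <;> rcases hS with rfl | rfl | rfl <;>
    simp only [List.nil_append, List.append_nil, List.cons_append, mMat_cons_apply_zero,
      mMat_cons_apply_one, mMat_append_singleton_zero_apply, mMat_append_pair_zero_apply,
      mMat_triList_zero_zero hU, mMat_triList_zero_one hU, mMat_triList_one_zero hU,
      mMat_triList_one_one hU] at h <;>
    field_simp at h <;> ring_nf at h <;> (try simp only [hsign, mul_one] at h) <;>
    simp only [List.length_append, List.length_cons, List.length_nil, length_triList]
  · have hl : 0 < l := Nat.pos_of_ne_zero (by rintro rfl; exact hs rfl)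
    exact .inl ⟨l, hl, by omega, by linear_combination h⟩
  · exact .inl ⟨l + 1, by omega, by omega, by linear_combination h⟩
  · exact absurd h.symm (pow_ne_zero _ hU)
  · exact .inl ⟨l + 1, by omega, by omega, by linear_combination -h⟩
  · exact absurd h.symm (mul_ne_zero (pow_ne_zero _ hU) (pow_ne_zero _ hU))
  · exact .inl ⟨l + 1, by omega, by omega,
      mul_left_cancel₀ (pow_ne_zero 2 hU) (by linear_combination -h)⟩
  · exact .inr ⟨l + 1, isTrinomialRoot_iff.2 (by linear_combination h)⟩
  · exact .inl ⟨l + 1, by omega, by omega,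
      mul_left_cancel₀ (pow_ne_zero (2 * l + 4) hU) (by linear_combination h)⟩
  · exact .inl ⟨l + 2, by omega, by omega,
      mul_left_cancel₀ (pow_ne_zero 2 hU) (by linear_combination -h)⟩

lemma exists_isTrinomialRoot_of_quiddityReducible (hU : U ≠ 0) {k : ℕ}
    (hmin : ∀ j, 0 < j → U ^ (2 * j) = 1 → k ≤ j) (h : QuiddityReducible (triList k U U⁻¹)) :
    ∃ L, IsTrinomialRoot U L := by
  obtain ⟨l, s, he, hsl, hs, hlen, hp⟩ := exists_segment_of_quiddityReducible h
  have hrot := he.triList_isRotated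
  have hinf : s <:+: triList (k + k) U U⁻¹ := by
    rw [triList_add]
    exact hsl.isInfix.trans hrot.infix_append_self
  rw [← hrot.perm.length_eq, length_triList] at hlen
  obtain ⟨P, j, S, hP, hS, rfl⟩ := infix_triList hinf
  have hsq : mMat (P ++ triList j U U⁻¹ ++ S) 0 0 ^ 2 = 1 := sq_eq_one_iff.2 hp
  obtain ⟨m, hm, hm3, hUm⟩ | hL :=
    exists_pow_eq_one_or_isTrinomialRoot_of_segment hU j hP hS hs hsq
  · exact absurd (hmin m hm hUm) (by omega)
  · exact hL

lemma quiddityReducible_triList_of_isTrinomialRoot (hU : U ≠ 0) {k R : ℕ} (hR : 1 ≤ R)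
    (hRk : R < k) (h : IsTrinomialRoot U R) : QuiddityReducible (triList k U U⁻¹) := by
  obtain ⟨m, rfl⟩ : ∃ m, k = m + 1 + R := ⟨k - R - 1, by omega⟩
  obtain ⟨j, rfl⟩ : ∃ j, R = j + 1 := ⟨R - 1, by omega⟩
  rw [triList_add]
  refine quiddityReducible_of_mMat_zero_zero U U (w := U⁻¹ :: U⁻¹ :: triList m U U⁻¹)
    (List.cons_ne_nil _ _) (List.cons_ne_nil _ _) (sq_eq_one_iff.1 ?_)
  have hsign : (-1 : K) ^ (j * 2) = 1 := Even.neg_one_pow ⟨j, by ring⟩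
  rw [isTrinomialRoot_iff] at h
  simp only [mMat_cons_apply_zero, mMat_cons_apply_one, mMat_triList_zero_zero hU,
    mMat_triList_zero_one hU]
  field_simp
  ring_nf
  simp only [hsign, mul_one]
  linear_combination h

end Field

end Quiddity

theorem stmt14_general (K : Type*) [Field K] (u : Kˣ)
    (k : ℕ) (hk : 0 < k)
    (hq : IsQuiddity (triList k (u : K) ((u⁻¹ : Kˣ) : K)))
    (hmin : ∀ j, 0 < j → IsQuiddity (triList j (u : K) ((u⁻¹ : Kˣ) : K)) → k ≤ j) :
    ¬ QuiddityReducible (triList k (u : K) ((u⁻¹ : Kˣ) : K)) ↔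
      ∀ l : ℕ, 1 ≤ l →
        (u : K) ^ (2 * l) + (u : K) ^ (l + 1) - 1 ≠ 0 ∧
        (u : K) ^ (2 * l) - (u : K) ^ (l + 1) - 1 ≠ 0 := by
  rw [Units.val_inv_eq_inv_val] at hq hmin ⊢
  have hu := u.ne_zero
  have hk2 : (u : K) ^ (2 * k) = 1 := (isQuiddity_triList_iff hu k).1 hq
  simp only [ne_eq, ← not_or]
  constructor
  · intro hirr l _ hl
    have hmod := IsTrinomialRoot.mod hk2 hl
    exact hirr (quiddityReducible_triList_of_isTrinomialRoot hu (hmod.one_le hu)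
      (Nat.mod_lt l hk) hmod)
  · intro hroots hred
    obtain ⟨l, hl⟩ := exists_isTrinomialRoot_of_quiddityReducible hu
      (fun j hj h => hmin j hj ((isQuiddity_triList_iff hu j).2 h)) hred
    exact hroots l (hl.one_le hu) hl

/-- for `u ≠ ±1`, the `u`-trinomial minimal solution is irreducible iff `u`
is not a root of `X^{2l} ± X^{l+1} − 1` for any `l ≥ 1`. -/
theorem stmt14 (K : Type*) [Field K] [Fintype K] (u : Kˣ)
    (hu1 : (u : K) ≠ 1) (hu2 : (u : K) ≠ -1) (k : ℕ) (hk : 0 < k)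
    (hq : IsQuiddity (triList k (u : K) ((u⁻¹ : Kˣ) : K)))
    (hmin : ∀ j, 0 < j → IsQuiddity (triList j (u : K) ((u⁻¹ : Kˣ) : K)) → k ≤ j) :
    ¬ QuiddityReducible (triList k (u : K) ((u⁻¹ : Kˣ) : K)) ↔
      ∀ l : ℕ, 1 ≤ l →
        (u : K) ^ (2 * l) + (u : K) ^ (l + 1) - 1 ≠ 0 ∧
        (u : K) ^ (2 * l) - (u : K) ^ (l + 1) - 1 ≠ 0 :=
  stmt14_general K u k hk hq hmin
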